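/- arXiv:2012.03376 — 6 statements merged into one kernel-verified Lean document; each statement's English description precedes it below -/
import Mathlib

section
/- Let μ be a probability measure and f measurable. If sup_k ((2k)!⁻¹ ∫ f^{2k} dμ)^{1/(2k)} ≤ 1, then ∫ (cosh(|f|/√2) − 1) dμ ≤ 1, hence the Luxemburg norm of f in L^{cosh−1}(μ) is at most √2. -/
open MeasureTheory Real
open scoped ENNReal

/-!
Expanding `cosh t - 1 = ∑_{k ≥ 1} t^{2k} / (2k)!` and integrating term by term (monotone
convergence), the `k`-th even moment of `|f| / √2` contributes `2^{-k} ∫ f^{2k} / (2k)! ≤ 2^{-k}`,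
and `∑_{k ≥ 1} 2^{-k} = 1`.
-/

lemma ENNReal.ofReal_cosh_sub_one_eq_tsum (t : ℝ) :
    ENNReal.ofReal (cosh t - 1) =
      ∑' n : ℕ, ENNReal.ofReal (t ^ (2 * (n + 1)) / (2 * (n + 1)).factorial) := by
  have hsum : HasSum (fun n : ℕ ↦ t ^ (2 * (n + 1)) / (2 * (n + 1)).factorial) (cosh t - 1) := by
    simpa using (hasSum_nat_add_iff' 1).2 (hasSum_cosh t)
  rw [← hsum.tsum_eq, ENNReal.ofReal_tsum_of_nonneg (fun n ↦ ?_) hsum.summable]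
  rw [pow_mul]
  positivity

section Moments

variable {α : Type*} [MeasurableSpace α] {μ : Measure α} {f : α → ℝ}

lemma lintegral_cosh_abs_div_sub_one_eq_tsum (hf : Measurable f) (c : ℝ) :
    ∫⁻ x, ENNReal.ofReal (cosh (|f x| / c) - 1) ∂μ =
      ∑' n : ℕ, ENNReal.ofReal ((c ^ 2)⁻¹ ^ (n + 1) / (2 * (n + 1)).factorial) *
        ∫⁻ x, ENNReal.ofReal (f x ^ (2 * (n + 1))) ∂μ := by
  have hpow (y : ℝ) (n : ℕ) :
      (|y| / c) ^ (2 * (n + 1)) = (c ^ 2)⁻¹ ^ (n + 1) * y ^ (2 * (n + 1)) := by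
    rw [pow_mul, pow_mul, div_pow, sq_abs, div_eq_inv_mul, mul_pow]
  have hmeas (n : ℕ) : Measurable fun x ↦ ENNReal.ofReal (f x ^ (2 * (n + 1))) :=
    (hf.pow_const _).ennreal_ofReal
  simp_rw [ENNReal.ofReal_cosh_sub_one_eq_tsum, hpow, mul_div_right_comm]
  rw [lintegral_tsum fun n ↦ ?_]
  · congr 1
    funext n
    rw [← lintegral_const_mul _ (hmeas n)]
    congr 1
    funext x
    rw [ENNReal.ofReal_mul (by positivity)]
  · exact ((hmeas n).const_mul _).aemeasurable.congr
      (.of_forall fun x ↦ (ENNReal.ofReal_mul (by positivity)).symm)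

lemma lintegral_cosh_abs_div_sub_one_le_of_moment_le (hf : Measurable f) (c : ℝ)
    (hmom : ∀ k : ℕ, 1 ≤ k →
      ∫⁻ x, ENNReal.ofReal (f x ^ (2 * k)) ∂μ ≤ ENNReal.ofReal ((2 * k).factorial : ℝ)) :
    ∫⁻ x, ENNReal.ofReal (cosh (|f x| / c) - 1) ∂μ ≤
      ENNReal.ofReal (c ^ 2)⁻¹ * (1 - ENNReal.ofReal (c ^ 2)⁻¹)⁻¹ := by
  rw [lintegral_cosh_abs_div_sub_one_eq_tsum hf, ← ENNReal.tsum_geometric_add_one]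
  refine ENNReal.tsum_le_tsum fun n ↦ ?_
  have hfact : ((2 * (n + 1)).factorial : ℝ) ≠ 0 := by positivity
  calc ENNReal.ofReal ((c ^ 2)⁻¹ ^ (n + 1) / (2 * (n + 1)).factorial) *
        ∫⁻ x, ENNReal.ofReal (f x ^ (2 * (n + 1))) ∂μ
      ≤ ENNReal.ofReal ((c ^ 2)⁻¹ ^ (n + 1) / (2 * (n + 1)).factorial) *
          ENNReal.ofReal ((2 * (n + 1)).factorial : ℝ) := by
        gcongr
        exact hmom (n + 1) (Nat.le_add_left 1 n)
    _ = ENNReal.ofReal (c ^ 2)⁻¹ ^ (n + 1) := by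
        rw [← ENNReal.ofReal_mul (by positivity), div_mul_cancel₀ _ hfact,
          ENNReal.ofReal_pow (by positivity)]

end Moments

theorem orlicz_bound_of_moment_bound_general
    {α : Type*} [MeasurableSpace α] (μ : Measure α)
    (f : α → ℝ) (hf : Measurable f)
    (hmom : ∀ k : ℕ, 1 ≤ k →
      ∫⁻ x, ENNReal.ofReal (f x ^ (2 * k)) ∂μ ≤ ENNReal.ofReal ((Nat.factorial (2 * k) : ℕ) : ℝ)) :
    ∫⁻ x, ENNReal.ofReal (Real.cosh (|f x| / Real.sqrt 2) - 1) ∂μ ≤ 1 := by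
  have hinv : ENNReal.ofReal (sqrt 2 ^ 2)⁻¹ = 2⁻¹ := by
    rw [sq_sqrt zero_le_two, ENNReal.ofReal_inv_of_pos two_pos, ENNReal.ofReal_ofNat]
  calc _ ≤ ENNReal.ofReal (sqrt 2 ^ 2)⁻¹ * (1 - ENNReal.ofReal (sqrt 2 ^ 2)⁻¹)⁻¹ :=
        lintegral_cosh_abs_div_sub_one_le_of_moment_le hf _ hmom
    _ = 1 := by
        rw [hinv, ENNReal.one_sub_inv_two, inv_inv]
        exact ENNReal.inv_mul_cancel two_ne_zero ENNReal.ofNat_ne_top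

/-- If all even moments satisfy `∫ f^{2k} dμ ≤ (2k)!` (i.e. the moment norm is at
most `1`), then `∫ (cosh(|f|/√2) - 1) dμ ≤ 1`, so the Luxemburg norm of `f` in
`L^{cosh-1}(μ)` is at most `√2`. -/
theorem orlicz_bound_of_moment_bound
    {α : Type*} [MeasurableSpace α] (μ : Measure α) [IsProbabilityMeasure μ]
    (f : α → ℝ) (hf : Measurable f)
    (hmom : ∀ k : ℕ, 1 ≤ k →
      ∫⁻ x, ENNReal.ofReal (f x ^ (2 * k)) ∂μ ≤ ENNReal.ofReal ((Nat.factorial (2 * k) : ℕ) : ℝ)) :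
    ∫⁻ x, ENNReal.ofReal (Real.cosh (|f x| / Real.sqrt 2) - 1) ∂μ ≤ 1 :=
  orlicz_bound_of_moment_bound_general μ f hf hmom
end

section
/- The moment equivalent norm f ↦ sup_k ((2k)!⁻¹ ∫ f^{2k} dμ)^{1/(2k)} is equivalent to the Luxemburg norm of the Orlicz space L^{cosh−1}(μ): if ‖f‖_{Luxemburg} ≤ 1 then the moment norm is ≤ 1, and if the moment norm is ≤ 1 then ‖f‖_{Luxemburg} ≤ √2. -/
/-!
Both bounds come from the Taylor series `cosh x - 1 = ∑_{k ≥ 1} x^{2k} / (2k)!` with nonnegative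
terms. A single term is dominated by the whole series, which bounds each normalised moment
`∫ f^{2k} / (2k)!` by the modular `∫ (cosh |f| - 1)`. Conversely, at scale `√2` the `k`-th term
picks up the factor `2^{-k}`, so integrating the series term by term bounds the modular of
`|f| / √2` by `∑_{k ≥ 1} 2^{-k} = 1` as soon as every normalised moment is at most `1`.
-/

open MeasureTheory Real

/-- The Luxemburg (quasi-)norm of `f` for the Young function `cosh - 1`. -/
noncomputable def luxemburgCosh {α : Type*} [MeasurableSpace α]
    (μ : Measure α) (f : α → ℝ) : ℝ :=
  sInf {c : ℝ | 0 < c ∧ ∫⁻ x, ENNReal.ofReal (Real.cosh (|f x| / c) - 1) ∂μ ≤ 1}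

open scoped ENNReal Nat

namespace Real

theorem pow_two_mul_div_factorial_nonneg (x : ℝ) (n : ℕ) : 0 ≤ x ^ (2 * n) / (2 * n)! :=
  div_nonneg ((even_two_mul n).pow_nonneg x) (Nat.cast_nonneg _)

theorem pow_two_mul_div_factorial_le_cosh_sub_one (x : ℝ) {k : ℕ} (hk : k ≠ 0) :
    x ^ (2 * k) / (2 * k)! ≤ cosh x - 1 := by
  have hpair := sum_le_hasSum {0, k} (fun n _ => pow_two_mul_div_factorial_nonneg x n)
    (hasSum_cosh x)
  rw [Finset.sum_pair hk.symm] at hpair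
  simp only [mul_zero, pow_zero, Nat.factorial_zero, Nat.cast_one, div_one] at hpair
  linarith

theorem hasSum_cosh_sub_one (x : ℝ) :
    HasSum (fun n : ℕ => x ^ (2 * (n + 1)) / (2 * (n + 1))!) (cosh x - 1) := by
  simpa using (hasSum_nat_add_iff' 1).mpr (hasSum_cosh x)

theorem ofReal_cosh_sub_one_eq_tsum (x : ℝ) :
    ENNReal.ofReal (cosh x - 1) =
      ∑' n : ℕ, ENNReal.ofReal (x ^ (2 * (n + 1)) / (2 * (n + 1))!) := by
  rw [← (hasSum_cosh_sub_one x).tsum_eq]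
  exact ENNReal.ofReal_tsum_of_nonneg (fun n => pow_two_mul_div_factorial_nonneg x (n + 1))
    (hasSum_cosh_sub_one x).summable

theorem ofReal_div_sqrt_two_pow_two_mul_div (x : ℝ) (n : ℕ) (c : ℝ) :
    ENNReal.ofReal ((x / √2) ^ (2 * n) / c) = 2⁻¹ ^ n * ENNReal.ofReal (x ^ (2 * n) / c) := by
  have hscale : (x / √2) ^ (2 * n) / c = 2⁻¹ ^ n * (x ^ (2 * n) / c) := by
    rw [div_pow, pow_mul √2, sq_sqrt zero_le_two, inv_pow]; ring
  rw [hscale, ENNReal.ofReal_mul (by positivity), ENNReal.ofReal_pow (by positivity),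
    ENNReal.ofReal_inv_of_pos zero_lt_two, ENNReal.ofReal_ofNat]

end Real

namespace MeasureTheory

variable {α : Type*} [MeasurableSpace α] {μ : Measure α}

theorem lintegral_ofReal_div_le_one_iff (g : α → ℝ) {c : ℝ} (hc : 0 < c) :
    ∫⁻ x, ENNReal.ofReal (g x / c) ∂μ ≤ 1 ↔ ∫⁻ x, ENNReal.ofReal (g x) ∂μ ≤ ENNReal.ofReal c := by
  simp_rw [ENNReal.ofReal_div_of_pos hc, div_eq_mul_inv]
  rw [lintegral_mul_const' _ _ (ENNReal.inv_ne_top.mpr (ENNReal.ofReal_pos.mpr hc).ne'),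
    ← div_eq_mul_inv, ENNReal.div_le_iff (ENNReal.ofReal_pos.mpr hc).ne' ENNReal.ofReal_ne_top,
    one_mul]

theorem lintegral_ofReal_pow_div_factorial_le (f : α → ℝ) {k : ℕ} (hk : k ≠ 0) :
    ∫⁻ x, ENNReal.ofReal (f x ^ (2 * k) / (2 * k)!) ∂μ ≤
      ∫⁻ x, ENNReal.ofReal (cosh (f x) - 1) ∂μ :=
  lintegral_mono fun _ =>
    ENNReal.ofReal_le_ofReal (Real.pow_two_mul_div_factorial_le_cosh_sub_one _ hk)

theorem lintegral_ofReal_cosh_sub_one_eq_tsum {f : α → ℝ} (hf : AEMeasurable f μ) :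
    ∫⁻ x, ENNReal.ofReal (cosh (f x) - 1) ∂μ =
      ∑' n : ℕ, ∫⁻ x, ENNReal.ofReal (f x ^ (2 * (n + 1)) / (2 * (n + 1))!) ∂μ := by
  simp_rw [Real.ofReal_cosh_sub_one_eq_tsum]
  exact lintegral_tsum fun n => ((hf.pow_const _).div_const _).ennreal_ofReal

theorem lintegral_ofReal_cosh_div_sqrt_two_sub_one_le {f : α → ℝ} (hf : AEMeasurable f μ)
    (hmom : ∀ k : ℕ, k ≠ 0 → ∫⁻ x, ENNReal.ofReal (f x ^ (2 * k) / (2 * k)!) ∂μ ≤ 1) :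
    ∫⁻ x, ENNReal.ofReal (cosh (f x / √2) - 1) ∂μ ≤ 1 :=
  calc ∫⁻ x, ENNReal.ofReal (cosh (f x / √2) - 1) ∂μ
      = ∑' n : ℕ, 2⁻¹ ^ (n + 1) *
          ∫⁻ x, ENNReal.ofReal (f x ^ (2 * (n + 1)) / (2 * (n + 1))!) ∂μ := by
        simp_rw [lintegral_ofReal_cosh_sub_one_eq_tsum (hf.div_const _),
          Real.ofReal_div_sqrt_two_pow_two_mul_div]
        congr with n
        exact lintegral_const_mul' _ _ (by simp)
    _ ≤ ∑' n : ℕ, 2⁻¹ ^ (n + 1) :=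
        ENNReal.tsum_le_tsum fun n => mul_le_of_le_one_right' (hmom _ n.succ_ne_zero)
    _ = 1 := by
        rw [ENNReal.tsum_geometric_add_one, ENNReal.one_sub_inv_two, inv_inv,
          ENNReal.inv_mul_cancel two_ne_zero ENNReal.ofNat_ne_top]

end MeasureTheory

theorem luxemburgCosh_le {α : Type*} [MeasurableSpace α] {μ : Measure α} {f : α → ℝ} {c : ℝ}
    (hc : 0 < c) (h : ∫⁻ x, ENNReal.ofReal (cosh (|f x| / c) - 1) ∂μ ≤ 1) :
    luxemburgCosh μ f ≤ c :=
  csInf_le ⟨0, fun _ hc => hc.1.le⟩ ⟨hc, h⟩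

theorem moment_norm_equivalent_luxemburg_general
    {α : Type*} [MeasurableSpace α] (μ : Measure α)
    (f : α → ℝ) (hf : Measurable f) :
    ((∫⁻ x, ENNReal.ofReal (Real.cosh |f x| - 1) ∂μ ≤ 1) →
      ∀ k : ℕ, 1 ≤ k →
        ∫⁻ x, ENNReal.ofReal (f x ^ (2 * k)) ∂μ ≤
          ENNReal.ofReal ((Nat.factorial (2 * k) : ℕ) : ℝ)) ∧
    ((∀ k : ℕ, 1 ≤ k →
        ∫⁻ x, ENNReal.ofReal (f x ^ (2 * k)) ∂μ ≤
          ENNReal.ofReal ((Nat.factorial (2 * k) : ℕ) : ℝ)) →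
      luxemburgCosh μ f ≤ Real.sqrt 2) := by
  have hmoment_iff (k : ℕ) := lintegral_ofReal_div_le_one_iff (μ := μ) (fun x => f x ^ (2 * k))
    (Nat.cast_pos.mpr (2 * k).factorial_pos)
  refine ⟨fun hcosh k hk => ?_, fun hmom => luxemburgCosh_le (by positivity) ?_⟩
  · simp only [cosh_abs] at hcosh
    exact (hmoment_iff k).mp ((lintegral_ofReal_pow_div_factorial_le f (by omega)).trans hcosh)
  · refine lintegral_ofReal_cosh_div_sqrt_two_sub_one_le hf.abs.aemeasurable fun k hk => ?_
    simpa only [(even_two_mul k).pow_abs] using (hmoment_iff k).mpr (hmom k (by omega))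

/-- The moment norm `sup_k ((2k)!⁻¹ ∫ f^{2k})^{1/2k}` is equivalent to the
Luxemburg norm of `L^{cosh-1}(μ)`: a Luxemburg bound `≤ 1` gives moment norm
`≤ 1`, and moment norm `≤ 1` gives Luxemburg norm `≤ √2`. -/
theorem moment_norm_equivalent_luxemburg
    {α : Type*} [MeasurableSpace α] (μ : Measure α) [IsProbabilityMeasure μ]
    (f : α → ℝ) (hf : Measurable f) :
    ((∫⁻ x, ENNReal.ofReal (Real.cosh |f x| - 1) ∂μ ≤ 1) →
      ∀ k : ℕ, 1 ≤ k →
        ∫⁻ x, ENNReal.ofReal (f x ^ (2 * k)) ∂μ ≤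
          ENNReal.ofReal ((Nat.factorial (2 * k) : ℕ) : ℝ)) ∧
    ((∀ k : ℕ, 1 ≤ k →
        ∫⁻ x, ENNReal.ofReal (f x ^ (2 * k)) ∂μ ≤
          ENNReal.ofReal ((Nat.factorial (2 * k) : ℕ) : ℝ)) →
      luxemburgCosh μ f ≤ Real.sqrt 2) :=
  moment_norm_equivalent_luxemburg_general μ f hf
end

section
/- Let γ be the standard Gaussian measure on ℝⁿ and f(x) = |x|². The truncated sequence f_N(x) = f(x)·1_{|x| ≤ N} converges to f pointwise and in every L^α(γ), 1 ≤ α < ∞, but does NOT converge to f in the Luxemburg norm of L^{cosh−1}(γ): for every N and every λ ≥ 1/2, ∫ (cosh(λ(f − f_N)) − 1) dγ = ∞. -/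
/-!
Since `f - f_N` is `|x|²` on `{|x| > N}` and `0` elsewhere, pointwise convergence is immediate and
the `L^α` convergence is dominated convergence, the moments of `γ` being finite. For the Orlicz
integral, `e^{-|x|²/2} (cosh (λ|x|²) - 1) ≥ e^{-u} (cosh u - 1) = (1 - e^{-u})² / 2` with
`u = |x|²/2` as soon as `λ ≥ 1/2`, so against Lebesgue measure the integrand is bounded below by a
positive constant outside a ball, a set of infinite volume.
-/

open MeasureTheory Real Filter Set

/-- The standard Gaussian measure on `ℝⁿ`. -/
noncomputable def gaussianMeasure (n : ℕ) : Measure (EuclideanSpace ℝ (Fin n)) :=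
  volume.withDensity fun x =>
    ENNReal.ofReal ((2 * Real.pi) ^ (-(n : ℝ) / 2) * Real.exp (-‖x‖ ^ 2 / 2))

open scoped ENNReal Topology

lemma eventually_indicator_norm_gt_eq_zero {E M : Type*} [Norm E] [Zero M] (g : E → M) (x : E) :
    ∀ᶠ N : ℕ in atTop, {y | (N : ℝ) < ‖y‖}.indicator g x = 0 :=
  (tendsto_natCast_atTop_atTop.eventually_ge_atTop ‖x‖).mono fun N hN =>
    indicator_of_notMem (s := {y | (N : ℝ) < ‖y‖}) (not_lt.2 hN) g

lemma tendsto_lintegral_indicator_norm_gt {E : Type*} [NormedAddCommGroup E] [MeasurableSpace E]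
    [OpensMeasurableSpace E] {μ : Measure E} {g : E → ℝ≥0∞} (hg : Measurable g)
    (hg_fin : ∫⁻ x, g x ∂μ ≠ ∞) :
    Tendsto (fun N : ℕ => ∫⁻ x, {y | (N : ℝ) < ‖y‖}.indicator g x ∂μ) atTop (𝓝 0) := by
  simpa using tendsto_lintegral_of_dominated_convergence g
    (fun _ => hg.indicator (measurableSet_lt measurable_const measurable_norm))
    (fun _ => ae_of_all _ (indicator_le_self _ g)) hg_fin
    (ae_of_all _ fun x => tendsto_const_nhds.congr'
      ((eventually_indicator_norm_gt_eq_zero g x).mono fun _ h => h.symm))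

lemma measure_compl_closedBall_eq_top {E : Type*} [NormedAddCommGroup E] [NormedSpace ℝ E]
    [FiniteDimensional ℝ E] [Nontrivial E] [MeasurableSpace E] [BorelSpace E]
    (μ : Measure E) [μ.IsAddHaarMeasure] (x : E) (r : ℝ) : μ (Metric.closedBall x r)ᶜ = ∞ := by
  rw [measure_compl measurableSet_closedBall measure_closedBall_lt_top.ne,
    measure_univ_of_isAddLeftInvariant, ENNReal.top_sub measure_closedBall_lt_top.ne]

lemma exp_neg_mul_cosh_sub_one (u : ℝ) : exp (-u) * (cosh u - 1) = (1 - exp (-u)) ^ 2 / 2 := by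
  rw [cosh_eq, exp_neg]
  field_simp
  ring

lemma le_exp_neg_half_mul_cosh_sub_one {t l : ℝ} (ht : 1 ≤ t) (hl : 1 / 2 ≤ l) :
    (1 - exp (-(1 / 2))) ^ 2 / 2 ≤ exp (-t / 2) * (cosh (l * t) - 1) := by
  have hcosh : cosh (t / 2) ≤ cosh (l * t) := by
    rw [cosh_le_cosh, abs_of_nonneg (by linarith), abs_of_nonneg (by nlinarith)]
    nlinarith
  have hexp : exp (-(t / 2)) ≤ exp (-(1 / 2)) := exp_le_exp.2 (by linarith)
  have hexp_le_one : exp (-(1 / 2)) ≤ 1 := exp_le_one_iff.2 (by norm_num)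
  calc (1 - exp (-(1 / 2))) ^ 2 / 2 ≤ (1 - exp (-(t / 2))) ^ 2 / 2 := by
        gcongr
    _ = exp (-(t / 2)) * (cosh (t / 2) - 1) := (exp_neg_mul_cosh_sub_one _).symm
    _ ≤ exp (-t / 2) * (cosh (l * t) - 1) := by
        rw [neg_div]
        gcongr

lemma lintegral_gaussianMeasure (n : ℕ) (g : EuclideanSpace ℝ (Fin n) → ℝ≥0∞) :
    ∫⁻ x, g x ∂gaussianMeasure n =
      ∫⁻ x, ENNReal.ofReal ((2 * π) ^ (-(n : ℝ) / 2) * exp (-‖x‖ ^ 2 / 2)) * g x :=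
  lintegral_withDensity_eq_lintegral_mul_non_measurable _ (by fun_prop)
    (ae_of_all _ fun _ => ENNReal.ofReal_lt_top) g

lemma lintegral_rpow_sq_norm_gaussianMeasure_lt_top (n : ℕ) {α : ℝ} (hα : 0 ≤ α) :
    ∫⁻ x, ENNReal.ofReal ((‖x‖ ^ 2) ^ α) ∂gaussianMeasure n < ∞ := by
  set c : ℝ := (2 * π) ^ (-(n : ℝ) / 2)
  have hmoment (t : ℝ) (ht : 0 ≤ t) :
      exp (-t / 2) * t ^ α ≤ (4 * α) ^ α * exp (-(1 / 4) * t) := by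
    have h := ProbabilityTheory.rpow_abs_le_mul_exp_abs t hα (t := 1 / 4) (by norm_num)
    rw [abs_of_nonneg ht, abs_of_pos (by norm_num), div_div_eq_mul_div, div_one, mul_comm α] at h
    calc exp (-t / 2) * t ^ α ≤ exp (-t / 2) * ((4 * α) ^ α * exp (1 / 4 * t)) := by gcongr
      _ = (4 * α) ^ α * exp (-(1 / 4) * t) := by
        rw [mul_left_comm, ← exp_add]
        ring_nf
  have hint : Integrable fun x : EuclideanSpace ℝ (Fin n) => exp (-(1 / 4) * ‖x‖ ^ 2) :=
    Integrable.of_integral_ne_zero <| by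
      rw [GaussianFourier.integral_rexp_neg_mul_sq_norm (by norm_num)]
      positivity
  rw [lintegral_gaussianMeasure]
  calc _ ≤ ∫⁻ x, ENNReal.ofReal (c * (4 * α) ^ α * exp (-(1 / 4) * ‖x‖ ^ 2)) :=
        lintegral_mono fun x => by
          rw [← ENNReal.ofReal_mul (by positivity)]
          refine ENNReal.ofReal_le_ofReal ?_
          simpa only [mul_assoc] using
            mul_le_mul_of_nonneg_left (hmoment _ (by positivity)) (by positivity : 0 ≤ c)
    _ < ∞ := (hint.const_mul _).lintegral_lt_top

lemma lintegral_gaussianMeasure_indicator_cosh_eq_top {n : ℕ} (hn : 1 ≤ n) (r : ℝ) {l : ℝ}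
    (hl : 1 / 2 ≤ l) :
    ∫⁻ x, {y | r < ‖y‖}.indicator (fun y => ENNReal.ofReal (cosh (l * ‖y‖ ^ 2) - 1)) x
      ∂gaussianMeasure n = ∞ := by
  have : Nonempty (Fin n) := ⟨⟨0, hn⟩⟩
  set c : ℝ := (2 * π) ^ (-(n : ℝ) / 2)
  set δ : ℝ := (1 - exp (-(1 / 2))) ^ 2 / 2
  have hcδ : 0 < c * δ := by
    have : 0 < 1 - exp (-(1 / 2)) := sub_pos.2 (exp_lt_one_iff.2 (by norm_num))
    positivity
  set S := (Metric.closedBall (0 : EuclideanSpace ℝ (Fin n)) (max r 1))ᶜ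
  have hbound (x) : S.indicator (fun _ => ENNReal.ofReal (c * δ)) x ≤
      ENNReal.ofReal (c * exp (-‖x‖ ^ 2 / 2)) *
        {y | r < ‖y‖}.indicator (fun y => ENNReal.ofReal (cosh (l * ‖y‖ ^ 2) - 1)) x := by
    by_cases hx : x ∈ S
    · have hx' : max r 1 < ‖x‖ := by simpa [S] using hx
      have hxr : x ∈ {y | r < ‖y‖} := (le_max_left r 1).trans_lt hx'
      have hx1 : 1 ≤ ‖x‖ ^ 2 := one_le_pow₀ ((le_max_right r 1).trans hx'.le)
      rw [indicator_of_mem hx, indicator_of_mem hxr, ← ENNReal.ofReal_mul (by positivity),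
        mul_assoc]
      gcongr
      exact le_exp_neg_half_mul_cosh_sub_one hx1 hl
    · simp [indicator_of_notMem hx]
  rw [lintegral_gaussianMeasure, eq_top_iff]
  calc ∞ = ENNReal.ofReal (c * δ) * volume S := by
        rw [measure_compl_closedBall_eq_top, ENNReal.mul_top (by simpa using hcδ)]
    _ = ∫⁻ x, S.indicator (fun _ => ENNReal.ofReal (c * δ)) x :=
        (lintegral_indicator_const measurableSet_closedBall.compl _).symm
    _ ≤ _ := lintegral_mono hbound

/-- The truncations `f_N = |x|² 1_{|x| ≤ N}` of `f(x) = |x|²` converge to `f`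
pointwise and in every `L^α(γ)`, `1 ≤ α < ∞`, but not in the Luxemburg norm of
`L^{cosh-1}(γ)`: for every `N` and every `λ ≥ 1/2` the Orlicz integral of the
difference is infinite. -/
theorem truncation_no_orlicz_convergence (n : ℕ) (hn : 1 ≤ n)
    (f : ℕ → EuclideanSpace ℝ (Fin n) → ℝ)
    (hfdef : ∀ N x, f N x = Set.indicator {y | ‖y‖ ≤ (N : ℝ)} (fun y => ‖y‖ ^ 2) x) :
    (∀ x, Tendsto (fun N => f N x) atTop (nhds (‖x‖ ^ 2))) ∧
    (∀ α : ℝ, 1 ≤ α →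
      Tendsto (fun N => ∫⁻ x, ENNReal.ofReal (|‖x‖ ^ 2 - f N x| ^ α) ∂(gaussianMeasure n))
        atTop (nhds 0)) ∧
    (∀ N : ℕ, ∀ l : ℝ, 1 / 2 ≤ l →
      ∫⁻ x, ENNReal.ofReal (Real.cosh (l * (‖x‖ ^ 2 - f N x)) - 1) ∂(gaussianMeasure n)
        = ⊤) := by
  have hdiff (N : ℕ) (x) : ‖x‖ ^ 2 - f N x = {y | (N : ℝ) < ‖y‖}.indicator (‖·‖ ^ 2) x := by
    rw [hfdef, ← Pi.sub_apply (‖·‖ ^ 2), ← indicator_compl]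
    simp only [compl_ofPred, not_le]
  refine ⟨fun x => ?_, fun α hα => ?_, fun N l hl => ?_⟩
  · refine tendsto_const_nhds.congr'
      ((eventually_indicator_norm_gt_eq_zero (‖·‖ ^ 2) x).mono fun N h => ?_)
    linarith [hdiff N x]
  · have hα0 : 0 < α := by linarith
    have hpow (N : ℕ) (x) : ENNReal.ofReal (|‖x‖ ^ 2 - f N x| ^ α) =
        {y | (N : ℝ) < ‖y‖}.indicator (fun y => ENNReal.ofReal ((‖y‖ ^ 2) ^ α)) x := by
      by_cases h : (N : ℝ) < ‖x‖ <;> simp [hdiff, h, hα0.ne']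
    simp_rw [hpow]
    exact tendsto_lintegral_indicator_norm_gt (by fun_prop)
      (lintegral_rpow_sq_norm_gaussianMeasure_lt_top n hα0.le).ne
  · have hcosh (x) : ENNReal.ofReal (cosh (l * (‖x‖ ^ 2 - f N x)) - 1) =
        {y | (N : ℝ) < ‖y‖}.indicator (fun y => ENNReal.ofReal (cosh (l * ‖y‖ ^ 2) - 1)) x := by
      by_cases h : (N : ℝ) < ‖x‖ <;> simp [hdiff, h]
    simp_rw [hcosh]
    exact lintegral_gaussianMeasure_indicator_cosh_eq_top hn N hl
end

section
/- For standard Gaussian measure γ on ℝⁿ and f, g ∈ C²_poly(ℝⁿ), ∫ ∇f·∇g dγ = ∫ f·(x·∇g − Δg) dγ. -/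
/-!
Write `dγ = φ dx` with `φ x = (2π)^(-n/2) exp (-‖x‖² / 2)`, so that `∂ᵥφ = -⟪x, v⟫ φ`.
Lebesgue integration by parts against `φ` then gives the Gaussian integration by parts formula
`∫ ∂ᵥh dγ = ∫ ⟪x, v⟫ h dγ`; all integrals converge because polynomially bounded functions are
`γ`-integrable. Applied to `h = f ∂ᵥg`, whose derivative is `∂ᵥf ∂ᵥg + f ∂ᵥ∂ᵥg`, this gives
`∫ ∂ᵥf ∂ᵥg dγ = ∫ f (⟪x, v⟫ ∂ᵥg - ∂ᵥ∂ᵥg) dγ`, and summing over the coordinate directions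
`v = eᵢ` gives the theorem.
-/

open MeasureTheory Real

/-- A function is polynomially bounded. -/
def PolyBounded {n : ℕ} (f : EuclideanSpace ℝ (Fin n) → ℝ) : Prop :=
  ∃ C : ℝ, ∃ k : ℕ, ∀ x, |f x| ≤ C * (1 + ‖x‖) ^ k

/-- Membership in `C²_poly`: twice continuously differentiable with all
derivatives up to order `2` polynomially bounded. -/
def CPoly2 {n : ℕ} (f : EuclideanSpace ℝ (Fin n) → ℝ) : Prop :=
  ContDiff ℝ 2 f ∧ ∀ j : ℕ, j ≤ 2 →
    ∃ C : ℝ, ∃ k : ℕ, ∀ x, ‖iteratedFDeriv ℝ j f x‖ ≤ C * (1 + ‖x‖) ^ k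

open scoped InnerProductSpace

section GaussianTail

variable {V : Type*} [NormedAddCommGroup V] [InnerProductSpace ℝ V] [FiniteDimensional ℝ V]
  [MeasurableSpace V] [BorelSpace V]

lemma integrable_exp_neg_sq_norm_div_four :
    Integrable (fun x : V => exp (-‖x‖ ^ 2 / 4)) := by
  convert (GaussianFourier.integrable_cexp_neg_mul_sq_norm_add (V := V) (b := 1 / 4)
    (by norm_num) 0 0).norm using 2 with x
  rw [Complex.norm_exp]
  norm_num
  norm_cast
  ring_nf

lemma integrable_one_add_norm_pow_mul_exp_neg_sq_norm_div_two (k : ℕ) :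
    Integrable (fun x : V => (1 + ‖x‖) ^ k * exp (-‖x‖ ^ 2 / 2)) := by
  refine (integrable_exp_neg_sq_norm_div_four.const_mul (exp ((k : ℝ) ^ 2))).mono'
    (by fun_prop) (Filter.Eventually.of_forall fun x => ?_)
  have ht : 0 ≤ ‖x‖ := norm_nonneg x
  rw [norm_of_nonneg (by positivity), ← exp_add]
  calc (1 + ‖x‖) ^ k * exp (-‖x‖ ^ 2 / 2)
      ≤ exp ‖x‖ ^ k * exp (-‖x‖ ^ 2 / 2) := by
        gcongr
        linarith [add_one_le_exp ‖x‖]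
    _ = exp (k * ‖x‖ - ‖x‖ ^ 2 / 2) := by rw [← exp_nat_mul, ← exp_add]; ring_nf
    _ ≤ exp ((k : ℝ) ^ 2 + -‖x‖ ^ 2 / 4) := by
        gcongr
        nlinarith [sq_nonneg (‖x‖ / 2 - k)]

end GaussianTail

section Gaussian

variable {n : ℕ}

noncomputable def gaussianDensity (n : ℕ) (x : EuclideanSpace ℝ (Fin n)) : ℝ :=
  (2 * π) ^ (-(n : ℝ) / 2) * exp (-‖x‖ ^ 2 / 2)

lemma gaussianDensity_nonneg (x : EuclideanSpace ℝ (Fin n)) : 0 ≤ gaussianDensity n x := by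
  unfold gaussianDensity
  positivity

lemma continuous_gaussianDensity : Continuous (gaussianDensity n) := by
  unfold gaussianDensity
  fun_prop

lemma hasFDerivAt_gaussianDensity (x : EuclideanSpace ℝ (Fin n)) :
    HasFDerivAt (gaussianDensity n) (-gaussianDensity n x • innerSL ℝ x) x := by
  have h := (((hasStrictFDerivAt_norm_sq x).hasFDerivAt.mul_const (-1 / 2)).exp).const_mul
    ((2 * π) ^ (-(n : ℝ) / 2))
  have hφ : gaussianDensity n =
      fun y => (2 * π) ^ (-(n : ℝ) / 2) * exp (‖y‖ ^ 2 * (-1 / 2)) := by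
    funext y
    simp only [gaussianDensity]
    ring_nf
  rw [hφ]
  refine h.congr_fderiv ?_
  ext v
  simp
  ring

lemma fderiv_gaussianDensity_apply (x v : EuclideanSpace ℝ (Fin n)) :
    fderiv ℝ (gaussianDensity n) x v = -(⟪x, v⟫_ℝ * gaussianDensity n x) := by
  simp [(hasFDerivAt_gaussianDensity x).fderiv, mul_comm]

lemma gaussianMeasure_eq_withDensity :
    gaussianMeasure n = volume.withDensity fun x => ENNReal.ofReal (gaussianDensity n x) := rfl

lemma integral_gaussianMeasure (h : EuclideanSpace ℝ (Fin n) → ℝ) :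
    ∫ x, h x ∂gaussianMeasure n = ∫ x, gaussianDensity n x * h x := by
  rw [gaussianMeasure_eq_withDensity, integral_withDensity_eq_integral_toReal_smul
    continuous_gaussianDensity.measurable.ennreal_ofReal (by simp)]
  simp [ENNReal.toReal_ofReal (gaussianDensity_nonneg _)]

lemma integrable_gaussianMeasure_iff {h : EuclideanSpace ℝ (Fin n) → ℝ} :
    Integrable h (gaussianMeasure n) ↔ Integrable (fun x => gaussianDensity n x * h x) := by
  rw [gaussianMeasure_eq_withDensity, integrable_withDensity_iff_integrable_smul'
    continuous_gaussianDensity.measurable.ennreal_ofReal (by simp)]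
  simp [ENNReal.toReal_ofReal (gaussianDensity_nonneg _)]

namespace PolyBounded

variable {f g : EuclideanSpace ℝ (Fin n) → ℝ}

lemma neg (hf : PolyBounded f) : PolyBounded (fun x => -f x) := by
  simpa [PolyBounded] using hf

lemma add (hf : PolyBounded f) (hg : PolyBounded g) : PolyBounded (fun x => f x + g x) := by
  obtain ⟨C₁, k₁, h₁⟩ := hf
  obtain ⟨C₂, k₂, h₂⟩ := hg
  refine ⟨|C₁| + |C₂|, k₁ + k₂, fun x => ?_⟩
  have hx : 1 ≤ 1 + ‖x‖ := le_add_of_nonneg_right (norm_nonneg x)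
  have hp₁ : (1 + ‖x‖) ^ k₁ ≤ (1 + ‖x‖) ^ (k₁ + k₂) := pow_le_pow_right₀ hx (by omega)
  have hp₂ : (1 + ‖x‖) ^ k₂ ≤ (1 + ‖x‖) ^ (k₁ + k₂) := pow_le_pow_right₀ hx (by omega)
  calc |f x + g x| ≤ C₁ * (1 + ‖x‖) ^ k₁ + C₂ * (1 + ‖x‖) ^ k₂ :=
        (abs_add_le _ _).trans (add_le_add (h₁ x) (h₂ x))
    _ ≤ |C₁| * (1 + ‖x‖) ^ (k₁ + k₂) + |C₂| * (1 + ‖x‖) ^ (k₁ + k₂) := by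
        gcongr <;> exact le_abs_self _
    _ = (|C₁| + |C₂|) * (1 + ‖x‖) ^ (k₁ + k₂) := by ring

lemma sub (hf : PolyBounded f) (hg : PolyBounded g) : PolyBounded (fun x => f x - g x) := by
  simpa [sub_eq_add_neg] using hf.add hg.neg

lemma mul (hf : PolyBounded f) (hg : PolyBounded g) : PolyBounded (fun x => f x * g x) := by
  obtain ⟨C₁, k₁, h₁⟩ := hf
  obtain ⟨C₂, k₂, h₂⟩ := hg
  refine ⟨C₁ * C₂, k₁ + k₂, fun x => ?_⟩
  calc |f x * g x| ≤ (C₁ * (1 + ‖x‖) ^ k₁) * (C₂ * (1 + ‖x‖) ^ k₂) := by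
        rw [abs_mul]
        exact mul_le_mul (h₁ x) (h₂ x) (abs_nonneg _) ((abs_nonneg _).trans (h₁ x))
    _ = C₁ * C₂ * (1 + ‖x‖) ^ (k₁ + k₂) := by ring

lemma integrable_gaussianMeasure (hf : PolyBounded f) (hm : Measurable f) :
    Integrable f (gaussianMeasure n) := by
  obtain ⟨C, k, h⟩ := hf
  rw [integrable_gaussianMeasure_iff]
  refine ((integrable_one_add_norm_pow_mul_exp_neg_sq_norm_div_two k).const_mul
    (C * (2 * π) ^ (-(n : ℝ) / 2))).mono'
    (continuous_gaussianDensity.measurable.mul hm).aestronglyMeasurable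
    (Filter.Eventually.of_forall fun x => ?_)
  rw [norm_mul, norm_of_nonneg (gaussianDensity_nonneg x), norm_eq_abs]
  calc gaussianDensity n x * |f x| ≤ gaussianDensity n x * (C * (1 + ‖x‖) ^ k) := by
        gcongr
        · exact gaussianDensity_nonneg x
        · exact h x
    _ = _ := by unfold gaussianDensity; ring

end PolyBounded

lemma polyBounded_inner_left (v : EuclideanSpace ℝ (Fin n)) :
    PolyBounded (fun x : EuclideanSpace ℝ (Fin n) => ⟪x, v⟫_ℝ) := by
  refine ⟨‖v‖, 1, fun x => ?_⟩
  calc |⟪x, v⟫_ℝ| ≤ ‖x‖ * ‖v‖ := abs_real_inner_le_norm x v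
    _ ≤ ‖v‖ * (1 + ‖x‖) ^ 1 := by nlinarith [norm_nonneg v]

namespace CPoly2

variable {f : EuclideanSpace ℝ (Fin n) → ℝ}

lemma polyBounded (hf : CPoly2 f) : PolyBounded f := by
  obtain ⟨C, k, h⟩ := hf.2 0 (by norm_num)
  exact ⟨C, k, fun x => by simpa using h x⟩

lemma polyBounded_fderiv_apply (hf : CPoly2 f) (v : EuclideanSpace ℝ (Fin n)) :
    PolyBounded (fun x => fderiv ℝ f x v) := by
  obtain ⟨C, k, h⟩ := hf.2 1 (by norm_num)
  refine ⟨C * ‖v‖, k, fun x => ?_⟩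
  calc |fderiv ℝ f x v| ≤ ‖fderiv ℝ f x‖ * ‖v‖ := (fderiv ℝ f x).le_opNorm v
    _ = ‖iteratedFDeriv ℝ 1 f x‖ * ‖v‖ := by
        rw [← norm_iteratedFDeriv_fderiv, norm_iteratedFDeriv_zero]
    _ ≤ C * (1 + ‖x‖) ^ k * ‖v‖ := by gcongr; exact h x
    _ = C * ‖v‖ * (1 + ‖x‖) ^ k := by ring

lemma differentiable_fderiv_apply (hf : CPoly2 f) (v : EuclideanSpace ℝ (Fin n)) :
    Differentiable ℝ (fun x => fderiv ℝ f x v) :=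
  ((hf.1.fderiv_right (m := 1) (by norm_num)).differentiable (by norm_num)).clm_apply
    (differentiable_const v)

lemma polyBounded_fderiv_fderiv_apply (hf : CPoly2 f) (v : EuclideanSpace ℝ (Fin n)) :
    PolyBounded (fun x => fderiv ℝ (fun y => fderiv ℝ f y v) x v) := by
  obtain ⟨C, k, h⟩ := hf.2 2 (by norm_num)
  refine ⟨C * ‖v‖ ^ 2, k, fun x => ?_⟩
  have hD : DifferentiableAt ℝ (fderiv ℝ f) x :=
    (hf.1.fderiv_right (m := 1) (by norm_num)).differentiable (by norm_num) x
  have hnorm : ‖fderiv ℝ (fderiv ℝ f) x‖ = ‖iteratedFDeriv ℝ 2 f x‖ := by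
    rw [← norm_iteratedFDeriv_zero (𝕜 := ℝ) (f := fderiv ℝ (fderiv ℝ f)),
      norm_iteratedFDeriv_fderiv, norm_iteratedFDeriv_fderiv]
  have hsecond : fderiv ℝ (fun y => fderiv ℝ f y v) x v = fderiv ℝ (fderiv ℝ f) x v v := by
    rw [fderiv_clm_apply hD (differentiableAt_const v)]
    simp
  calc |fderiv ℝ (fun y => fderiv ℝ f y v) x v|
      ≤ ‖fderiv ℝ (fderiv ℝ f) x v‖ * ‖v‖ := by
        rw [hsecond, ← norm_eq_abs]
        exact ContinuousLinearMap.le_opNorm _ _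
    _ ≤ ‖fderiv ℝ (fderiv ℝ f) x‖ * ‖v‖ * ‖v‖ := by gcongr; exact ContinuousLinearMap.le_opNorm _ _
    _ ≤ C * (1 + ‖x‖) ^ k * ‖v‖ * ‖v‖ := by rw [hnorm]; gcongr; exact h x
    _ = C * ‖v‖ ^ 2 * (1 + ‖x‖) ^ k := by ring

end CPoly2

theorem integral_fderiv_apply_gaussianMeasure {h : EuclideanSpace ℝ (Fin n) → ℝ}
    (v : EuclideanSpace ℝ (Fin n)) (hd : Differentiable ℝ h) (hb : PolyBounded h)
    (hb' : PolyBounded (fun x => fderiv ℝ h x v)) :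
    ∫ x, fderiv ℝ h x v ∂gaussianMeasure n = ∫ x, ⟪x, v⟫_ℝ * h x ∂gaussianMeasure n := by
  have hm : Measurable h := hd.continuous.measurable
  have hφ'h : Integrable (fun x => fderiv ℝ (gaussianDensity n) x v * h x) := by
    refine (integrable_gaussianMeasure_iff.1 (((polyBounded_inner_left v).mul hb).neg
      |>.integrable_gaussianMeasure (by fun_prop))).congr (Filter.Eventually.of_forall fun x => ?_)
    simp only [fderiv_gaussianDensity_apply]
    ring
  have hφh' : Integrable (fun x => gaussianDensity n x * fderiv ℝ h x v) :=
    integrable_gaussianMeasure_iff.1 (hb'.integrable_gaussianMeasure (by fun_prop))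
  have hφh : Integrable (fun x => gaussianDensity n x * h x) :=
    integrable_gaussianMeasure_iff.1 (hb.integrable_gaussianMeasure hm)
  rw [integral_gaussianMeasure, integral_gaussianMeasure,
    integral_mul_fderiv_eq_neg_fderiv_mul_of_integrable hφ'h hφh' hφh
      (fun x _ => (hasFDerivAt_gaussianDensity x).differentiableAt) (fun x _ => hd x),
    ← integral_neg]
  congr 1 with x
  rw [fderiv_gaussianDensity_apply]
  ring

theorem integral_fderiv_mul_gaussianMeasure {f g : EuclideanSpace ℝ (Fin n) → ℝ}
    (v : EuclideanSpace ℝ (Fin n)) (hfd : Differentiable ℝ f) (hgd : Differentiable ℝ g)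
    (hf : PolyBounded f) (hf' : PolyBounded (fun x => fderiv ℝ f x v))
    (hg : PolyBounded g) (hg' : PolyBounded (fun x => fderiv ℝ g x v)) :
    ∫ x, fderiv ℝ f x v * g x ∂gaussianMeasure n =
      ∫ x, f x * (⟪x, v⟫_ℝ * g x - fderiv ℝ g x v) ∂gaussianMeasure n := by
  have hfm : Measurable f := hfd.continuous.measurable
  have hgm : Measurable g := hgd.continuous.measurable
  have hderiv : ∀ x, fderiv ℝ (f * g) x v =
      fderiv ℝ f x v * g x + f x * fderiv ℝ g x v := fun x => by
    rw [fderiv_mul (hfd x) (hgd x)]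
    simp only [add_apply, smul_apply, smul_eq_mul]
    ring
  have hibp := integral_fderiv_apply_gaussianMeasure v (hfd.mul hgd) (hf.mul hg)
    (by simpa only [hderiv] using (hf'.mul hg).add (hf.mul hg'))
  have i₁ : Integrable (fun x => fderiv ℝ f x v * g x) (gaussianMeasure n) :=
    (hf'.mul hg).integrable_gaussianMeasure (by fun_prop)
  have i₂ : Integrable (fun x => f x * fderiv ℝ g x v) (gaussianMeasure n) :=
    (hf.mul hg').integrable_gaussianMeasure (by fun_prop)
  have i₃ : Integrable (fun x => f x * (⟪x, v⟫_ℝ * g x)) (gaussianMeasure n) :=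
    (hf.mul ((polyBounded_inner_left v).mul hg)).integrable_gaussianMeasure (by fun_prop)
  simp only [hderiv, integral_add i₁ i₂, Pi.mul_apply, mul_left_comm _ (f _)] at hibp
  simp only [mul_sub, integral_sub i₃ i₂]
  linarith

end Gaussian

/-- `∫ ∇f·∇g dγ = ∫ f (x·∇g - Δg) dγ` for `f, g ∈ C²_poly(ℝⁿ)`. -/
theorem gaussian_gradient_integration_by_parts (n : ℕ)
    (f g : EuclideanSpace ℝ (Fin n) → ℝ) (hf : CPoly2 f) (hg : CPoly2 g) :
    ∫ x, (∑ i : Fin n,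
        fderiv ℝ f x (EuclideanSpace.single i 1) *
          fderiv ℝ g x (EuclideanSpace.single i 1)) ∂(gaussianMeasure n) =
    ∫ x, f x * ((∑ i : Fin n, x i * fderiv ℝ g x (EuclideanSpace.single i 1)) -
        ∑ i : Fin n,
          fderiv ℝ (fun y => fderiv ℝ g y (EuclideanSpace.single i 1)) x
            (EuclideanSpace.single i 1)) ∂(gaussianMeasure n) := by
  have hfd : Differentiable ℝ f := hf.1.differentiable (by norm_num)
  have hfm : Measurable f := hfd.continuous.measurable
  have hcoord (i : Fin n) : PolyBounded (fun x : EuclideanSpace ℝ (Fin n) => x i) := by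
    simpa [EuclideanSpace.inner_single_right] using
      polyBounded_inner_left (EuclideanSpace.single i 1)
  simp only [← Finset.sum_sub_distrib, Finset.mul_sum]
  rw [integral_finsetSum _ fun i _ => ((hf.polyBounded_fderiv_apply _).mul
      (hg.polyBounded_fderiv_apply _)).integrable_gaussianMeasure (by fun_prop),
    integral_finsetSum _ fun i _ => (hf.polyBounded.mul (((hcoord i).mul
      (hg.polyBounded_fderiv_apply _)).sub (hg.polyBounded_fderiv_fderiv_apply _)))
      |>.integrable_gaussianMeasure (by fun_prop)]
  refine Finset.sum_congr rfl fun i _ => ?_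
  simpa [EuclideanSpace.inner_single_right] using
    integral_fderiv_mul_gaussianMeasure (EuclideanSpace.single i 1) hfd
    (hg.differentiable_fderiv_apply _) hf.polyBounded (hf.polyBounded_fderiv_apply _)
    (hg.polyBounded_fderiv_apply _) (hg.polyBounded_fderiv_fderiv_apply _)
end

section
/- Let γ be a probability measure, u measurable with ∫ u dγ = 0, and suppose K₁(tu) := log ∫ e^{tu} dγ is finite for all t in an open interval I containing [0,1]. Let F be logarithmically convex on ℝ with Φ = F − 1 a Young function, and let f satisfy ∫ F(λ f) dγ ≤ 2 for all |λ| ≤ 1. Then for any t ∈ I with t > 1, ∫ Φ((t−1)/t · f) · e^{u − K₁(u)} dγ ≤ e^{−K₁(u)}·(2(t−1)/t + (1/t)e^{K₁(tu)}) − 1 < ∞; in particular f belongs to the Orlicz space L^Φ(p·γ) where p = e^{u − K₁(u)}. -/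
open MeasureTheory Real Set

/-!
Log-convexity of `F` and weighted AM–GM give, pointwise, for `t ≥ 1`,
`F((t-1)/t · x) e^{y} ≤ (t-1)/t · F(x) + 1/t · e^{t y}`,
i.e. convexity of `(λ, s) ↦ F(λ f) e^{s u}` along
`((t-1)/t, 1) = (t-1)/t · (1, 0) + 1/t · (0, t)`. Integrating against `γ` bounds
`∫ F((t-1)/t · f) e^{u}` by `2 (t-1)/t + e^{K t}/t`; multiplying by `e^{-K 1}` and subtracting
the total mass `∫ e^{u - K 1} = 1` of the tilted measure gives the bound on `∫ Φ((t-1)/t · f) p`.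
-/

open ProbabilityTheory

lemma ConvexOn.apply_zero_le_of_even {g : ℝ → ℝ} (hg : ConvexOn ℝ univ g)
    (heven : ∀ x, g (-x) = g x) (y : ℝ) : g 0 ≤ g y := by
  have h := hg.2 (mem_univ y) (mem_univ (-y)) (by norm_num : (0 : ℝ) ≤ 1 / 2)
    (by norm_num : (0 : ℝ) ≤ 1 / 2) (by norm_num)
  simp only [smul_eq_mul, heven] at h
  rw [show (1 : ℝ) / 2 * y + 1 / 2 * -y = 0 by ring] at h
  linarith

section LogConvex

variable {F : ℝ → ℝ}

lemma le_rpow_of_convexOn_log (hFpos : ∀ x, 0 < F x)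
    (hFlogconv : ConvexOn ℝ univ (fun x => log (F x))) (hF1 : F 0 = 1)
    {a : ℝ} (ha0 : 0 ≤ a) (ha1 : a ≤ 1) (x : ℝ) : F (a * x) ≤ F x ^ a := by
  have h := hFlogconv.2 (mem_univ x) (mem_univ 0) ha0 (sub_nonneg.2 ha1) (add_sub_cancel a 1)
  simp only [smul_eq_mul, mul_zero, add_zero, hF1, log_one] at h
  calc F (a * x) = exp (log (F (a * x))) := (exp_log (hFpos _)).symm
    _ ≤ exp (log (F x) * a) := exp_le_exp.2 (by linarith)
    _ = F x ^ a := (rpow_def_of_pos (hFpos x) a).symm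

lemma mul_exp_le_of_convexOn_log (hFpos : ∀ x, 0 < F x)
    (hFlogconv : ConvexOn ℝ univ (fun x => log (F x))) (hF1 : F 0 = 1)
    {t : ℝ} (ht : 1 ≤ t) (x y : ℝ) :
    F ((t - 1) / t * x) * exp y ≤ (t - 1) / t * F x + 1 / t * exp (t * y) := by
  have ht0 : 0 < t := by linarith
  have hs0 : 0 ≤ (t - 1) / t := div_nonneg (by linarith) ht0.le
  have hw : (t - 1) / t + 1 / t = 1 := by field_simp; ring
  have hexp : exp y = exp (t * y) ^ (1 / t) := by rw [← exp_mul]; field_simp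
  calc F ((t - 1) / t * x) * exp y ≤ F x ^ ((t - 1) / t) * exp (t * y) ^ (1 / t) := by
        rw [hexp]
        gcongr
        exact le_rpow_of_convexOn_log hFpos hFlogconv hF1 hs0
          (by linarith [hw, one_div_pos.2 ht0]) x
    _ ≤ (t - 1) / t * F x + 1 / t * exp (t * y) :=
        geom_mean_le_arith_mean2_weighted hs0 (by positivity) (hFpos x).le (exp_pos _).le hw

lemma lintegral_mul_exp_le_of_convexOn_log {α : Type*} [MeasurableSpace α] (μ : Measure α)
    (hFpos : ∀ x, 0 < F x) (hFlogconv : ConvexOn ℝ univ (fun x => log (F x))) (hF1 : F 0 = 1)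
    {t : ℝ} (ht : 1 ≤ t) (f : α → ℝ) {u : α → ℝ} (hu : Measurable u) :
    ∫⁻ x, ENNReal.ofReal (F ((t - 1) / t * f x) * exp (u x)) ∂μ ≤
      ENNReal.ofReal ((t - 1) / t) * ∫⁻ x, ENNReal.ofReal (F (f x)) ∂μ +
        ENNReal.ofReal (1 / t) * ∫⁻ x, ENNReal.ofReal (exp (t * u x)) ∂μ := by
  have ht0 : 0 < t := by linarith
  calc _ ≤ ∫⁻ x, (ENNReal.ofReal ((t - 1) / t) * ENNReal.ofReal (F (f x)) +
          ENNReal.ofReal (1 / t) * ENNReal.ofReal (exp (t * u x))) ∂μ := by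
        refine lintegral_mono fun x => ?_
        rw [← ENNReal.ofReal_mul (div_nonneg (by linarith) ht0.le),
          ← ENNReal.ofReal_mul (by positivity)]
        exact (ENNReal.ofReal_le_ofReal
          (mul_exp_le_of_convexOn_log hFpos hFlogconv hF1 ht _ _)).trans
          ENNReal.ofReal_add_le
    _ = _ := by
        rw [lintegral_add_right _ ((hu.const_mul t).exp.ennreal_ofReal.const_mul _),
          lintegral_const_mul' _ _ ENNReal.ofReal_ne_top,
          lintegral_const_mul' _ _ ENNReal.ofReal_ne_top]

end LogConvex

section Lintegral

variable {α : Type*} [MeasurableSpace α] (μ : Measure α)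

lemma lintegral_ofReal_exp_mul_eq_exp_cgf [NeZero μ] {u : α → ℝ} (hu : Measurable u) {t : ℝ}
    (hfin : ∫⁻ x, ENNReal.ofReal (exp (t * u x)) ∂μ < ⊤) :
    ∫⁻ x, ENNReal.ofReal (exp (t * u x)) ∂μ = ENNReal.ofReal (exp (cgf u μ t)) := by
  have hnn : 0 ≤ᵐ[μ] fun x => exp (t * u x) := ae_of_all _ fun x => (exp_pos _).le
  have hint : Integrable (fun x => exp (t * u x)) μ :=
    ⟨(hu.const_mul t).exp.aestronglyMeasurable, (hasFiniteIntegral_iff_ofReal hnn).2 hfin⟩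
  rw [exp_cgf hint, mgf, ofReal_integral_eq_lintegral_ofReal hint hnn]

lemma lintegral_ofReal_mul_exp_sub (g v : α → ℝ) (c : ℝ) :
    ∫⁻ x, ENNReal.ofReal (g x * exp (v x - c)) ∂μ =
      ENNReal.ofReal (exp (-c)) * ∫⁻ x, ENNReal.ofReal (g x * exp (v x)) ∂μ := by
  rw [← lintegral_const_mul' _ _ ENNReal.ofReal_ne_top]
  refine lintegral_congr fun x => ?_
  rw [← ENNReal.ofReal_mul (exp_pos _).le, exp_sub, exp_neg]
  congr 1
  field_simp

lemma lintegral_ofReal_sub_one_mul_add {g p : α → ℝ} (hg : ∀ x, 1 ≤ g x) (hp : ∀ x, 0 ≤ p x)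
    (hpm : Measurable p) :
    ∫⁻ x, ENNReal.ofReal ((g x - 1) * p x) ∂μ + ∫⁻ x, ENNReal.ofReal (p x) ∂μ =
      ∫⁻ x, ENNReal.ofReal (g x * p x) ∂μ := by
  rw [← lintegral_add_right _ hpm.ennreal_ofReal]
  refine lintegral_congr fun x => ?_
  rw [← ENNReal.ofReal_add (mul_nonneg (sub_nonneg.2 (hg x)) (hp x)) (hp x)]
  congr 1
  ring

end Lintegral

theorem orlicz_space_change_of_density_general
    {α : Type*} [MeasurableSpace α] (γ : Measure α) [IsProbabilityMeasure γ]
    (u f : α → ℝ) (hu : Measurable u)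
    (I : Set ℝ) (hI01 : Icc (0:ℝ) 1 ⊆ I)
    (K : ℝ → ℝ)
    (hKdef : ∀ t ∈ I, K t = Real.log (∫ x, Real.exp (t * u x) ∂γ))
    (hKfin : ∀ t ∈ I, ∫⁻ x, ENNReal.ofReal (Real.exp (t * u x)) ∂γ < ⊤)
    (F : ℝ → ℝ) (hFpos : ∀ x, 0 < F x)
    (hFlogconv : ConvexOn ℝ univ (fun x => Real.log (F x)))
    (hF1 : F 0 = 1)
    (hFeven : ∀ x, F (-x) = F x)
    (hf : ∀ l : ℝ, |l| ≤ 1 → ∫⁻ x, ENNReal.ofReal (F (l * f x)) ∂γ ≤ 2) :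
    ∀ t ∈ I, 1 < t →
      ∫⁻ x, ENNReal.ofReal ((F ((t - 1) / t * f x) - 1) *
          Real.exp (u x - K 1)) ∂γ ≤
        ENNReal.ofReal (Real.exp (-K 1) *
          (2 * (t - 1) / t + (1 / t) * Real.exp (K t)) - 1) := by
  intro t htI ht1
  have hK : ∀ s ∈ I, ∫⁻ x, ENNReal.ofReal (exp (s * u x)) ∂γ = ENNReal.ofReal (exp (K s)) :=
    fun s hs => (hKdef s hs : K s = cgf u γ s) ▸
      lintegral_ofReal_exp_mul_eq_exp_cgf γ hu (hKfin s hs)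
  have hmass : ∫⁻ x, ENNReal.ofReal (exp (u x - K 1)) ∂γ = 1 := by
    have h := lintegral_ofReal_mul_exp_sub γ 1 u (K 1)
    have h1 := hK 1 (hI01 ⟨zero_le_one, le_rfl⟩)
    simp only [Pi.one_apply, one_mul] at h h1
    rw [h, h1, ← ENNReal.ofReal_mul (exp_pos _).le, ← exp_add, neg_add_cancel, exp_zero,
      ENNReal.ofReal_one]
  have hFge : ∀ y, 1 ≤ F y := fun y => by
    have h := hFlogconv.apply_zero_le_of_even (fun x => by simp only [hFeven]) y
    rwa [hF1, log_one, log_nonneg_iff (hFpos y)] at h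
  have hFf : ∫⁻ x, ENNReal.ofReal (F (f x)) ∂γ ≤ 2 := by simpa using hf 1 (by norm_num)
  have hsplit := lintegral_ofReal_sub_one_mul_add γ (fun x => hFge ((t - 1) / t * f x))
    (fun x => (exp_pos (u x - K 1)).le) (hu.sub_const _).exp
  rw [hmass] at hsplit
  have hs0 : 0 ≤ (t - 1) / t := div_nonneg (by linarith) (by linarith)
  calc _ ≤ ∫⁻ x, ENNReal.ofReal (F ((t - 1) / t * f x) * exp (u x - K 1)) ∂γ - 1 :=
        ENNReal.le_sub_of_add_le_right ENNReal.one_ne_top hsplit.le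
    _ = ENNReal.ofReal (exp (-K 1)) *
          ∫⁻ x, ENNReal.ofReal (F ((t - 1) / t * f x) * exp (u x)) ∂γ - 1 := by
        rw [lintegral_ofReal_mul_exp_sub]
    _ ≤ ENNReal.ofReal (exp (-K 1)) * (ENNReal.ofReal ((t - 1) / t) * 2 +
          ENNReal.ofReal (1 / t) * ENNReal.ofReal (exp (K t))) - 1 := by
        rw [← hK t htI]
        gcongr
        exact (lintegral_mul_exp_le_of_convexOn_log γ hFpos hFlogconv hF1 ht1.le f hu).trans
          (by gcongr)
    _ = _ := by
        rw [ENNReal.ofReal_sub _ zero_le_one, ENNReal.ofReal_one, ← ENNReal.ofReal_ofNat 2,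
          ← ENNReal.ofReal_mul hs0, ← ENNReal.ofReal_mul (by positivity),
          ← ENNReal.ofReal_add (by positivity) (by positivity),
          ← ENNReal.ofReal_mul (exp_pos _).le]
        congr 2
        ring

/-- Exponential change of measure preserves Orlicz integrability: if
`∫ F(λf) dγ ≤ 2` for `|λ| ≤ 1` and `K₁(tu) = log ∫ e^{tu} dγ` is finite on an
open interval `I ⊇ [0,1]`, then for `t ∈ I`, `t > 1`,
`∫ Φ((t-1)/t · f) e^{u - K₁(u)} dγ ≤ e^{-K₁(u)}(2(t-1)/t + e^{K₁(tu)}/t) - 1 < ∞`,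
so `f ∈ L^Φ(p·γ)` with `p = e^{u - K₁(u)}`. -/
theorem orlicz_space_change_of_density
    {α : Type*} [MeasurableSpace α] (γ : Measure α) [IsProbabilityMeasure γ]
    (u f : α → ℝ) (hu : Measurable u) (hfm : Measurable f)
    (hu0 : ∫ x, u x ∂γ = 0)
    (I : Set ℝ) (hIopen : IsOpen I) (hI01 : Icc (0:ℝ) 1 ⊆ I)
    (K : ℝ → ℝ)
    (hKdef : ∀ t ∈ I, K t = Real.log (∫ x, Real.exp (t * u x) ∂γ))
    (hKfin : ∀ t ∈ I, ∫⁻ x, ENNReal.ofReal (Real.exp (t * u x)) ∂γ < ⊤)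
    (F : ℝ → ℝ) (hFpos : ∀ x, 0 < F x)
    (hFlogconv : ConvexOn ℝ univ (fun x => Real.log (F x)))
    (hF1 : F 0 = 1)
    (hΦconv : ConvexOn ℝ (Ici 0) (fun x => F x - 1))
    (hΦmono : StrictMonoOn (fun x => F x - 1) (Ici 0))
    (hFeven : ∀ x, F (-x) = F x)
    (hf : ∀ l : ℝ, |l| ≤ 1 → ∫⁻ x, ENNReal.ofReal (F (l * f x)) ∂γ ≤ 2) :
    ∀ t ∈ I, 1 < t →
      ∫⁻ x, ENNReal.ofReal ((F ((t - 1) / t * f x) - 1) *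
          Real.exp (u x - K 1)) ∂γ ≤
        ENNReal.ofReal (Real.exp (-K 1) *
          (2 * (t - 1) / t + (1 / t) * Real.exp (K t)) - 1) :=
  orlicz_space_change_of_density_general γ u f hu I hI01 K hKdef hKfin F hFpos hFlogconv hF1 hFeven
    hf
end

section
/- Let γ be the standard Gaussian measure on ℝⁿ and let B₁ = {u ∈ L^{cosh−1}(γ) : ∫ u dγ = 0}. If u ∈ B₁ has Luxemburg norm ‖u‖ < 1, then K₁(u) = log ∫ e^{u} dγ is finite; that is, the open unit ball of B₁ is contained in the proper domain of the convex function K₁. -/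
/-!
Because `ρ ≤ 1`, `e^u ≤ e^{|u|/ρ} ≤ 2 (cosh (|u|/ρ) - 1) + 2` pointwise, so
`∫ e^u dγ ≤ 2 ∫ (cosh (|u|/ρ) - 1) dγ + 2 γ(ℝⁿ)`, which is finite since `γ` is a probability
measure.
-/
open MeasureTheory Real

lemma integral_exp_neg_sq_norm_div_two (n : ℕ) :
    ∫ x : EuclideanSpace ℝ (Fin n), exp (-‖x‖ ^ 2 / 2) = (2 * π) ^ ((n : ℝ) / 2) := by
  have := GaussianFourier.integral_rexp_neg_mul_sq_norm (V := EuclideanSpace ℝ (Fin n))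
    (b := 1 / 2) (by norm_num)
  simp only [finrank_euclideanSpace_fin] at this
  convert this using 4 <;> ring

instance isProbabilityMeasure_gaussianMeasure (n : ℕ) :
    IsProbabilityMeasure (gaussianMeasure n) := by
  have hint : Integrable fun x : EuclideanSpace ℝ (Fin n) => exp (-‖x‖ ^ 2 / 2) :=
    Integrable.of_integral_ne_zero (by rw [integral_exp_neg_sq_norm_div_two]; positivity)
  constructor
  rw [gaussianMeasure, withDensity_apply _ MeasurableSet.univ, setLIntegral_univ,
    ← ofReal_integral_eq_lintegral_ofReal (hint.const_mul _) (ae_of_all _ fun x => by positivity),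
    integral_const_mul, integral_exp_neg_sq_norm_div_two, ← rpow_add (by positivity), neg_div,
    neg_add_cancel, rpow_zero, ENNReal.ofReal_one]

lemma exp_le_exp_abs_div {ρ : ℝ} (hρ : 0 < ρ) (hρ1 : ρ ≤ 1) (x : ℝ) :
    exp x ≤ exp (|x| / ρ) :=
  exp_le_exp.2 <| (le_abs_self x).trans (le_div_self (abs_nonneg x) hρ hρ1)

lemma exp_le_two_mul_cosh_sub_one_add_two (x : ℝ) : exp x ≤ 2 * (cosh x - 1) + 2 := by
  rw [cosh_eq]; linarith [exp_pos (-x)]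

lemma ofReal_exp_le_two_mul_ofReal_cosh_sub_one_add_two {ρ : ℝ} (hρ : 0 < ρ) (hρ1 : ρ ≤ 1)
    (x : ℝ) :
    ENNReal.ofReal (exp x) ≤ 2 * ENNReal.ofReal (cosh (|x| / ρ) - 1) + 2 := by
  have hcosh : 0 ≤ cosh (|x| / ρ) - 1 := sub_nonneg.2 (one_le_cosh _)
  calc ENNReal.ofReal (exp x)
      ≤ ENNReal.ofReal (2 * (cosh (|x| / ρ) - 1) + 2) := ENNReal.ofReal_le_ofReal <|
        (exp_le_exp_abs_div hρ hρ1 x).trans (exp_le_two_mul_cosh_sub_one_add_two _)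
    _ = 2 * ENNReal.ofReal (cosh (|x| / ρ) - 1) + 2 := by
        rw [ENNReal.ofReal_add (mul_nonneg zero_le_two hcosh) zero_le_two,
          ENNReal.ofReal_mul zero_le_two]
        norm_num

theorem lintegral_exp_lt_top_of_lintegral_cosh_sub_one_ne_top {α : Type*} [MeasurableSpace α]
    {μ : Measure α} [IsFiniteMeasure μ] {f : α → ℝ} {ρ : ℝ} (hρ : 0 < ρ) (hρ1 : ρ ≤ 1)
    (hf : ∫⁻ x, ENNReal.ofReal (cosh (|f x| / ρ) - 1) ∂μ ≠ ⊤) :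
    ∫⁻ x, ENNReal.ofReal (exp (f x)) ∂μ < ⊤ :=
  calc ∫⁻ x, ENNReal.ofReal (exp (f x)) ∂μ
      ≤ ∫⁻ x, (2 * ENNReal.ofReal (cosh (|f x| / ρ) - 1) + 2) ∂μ :=
        lintegral_mono fun x => ofReal_exp_le_two_mul_ofReal_cosh_sub_one_add_two hρ hρ1 (f x)
    _ = 2 * ∫⁻ x, ENNReal.ofReal (cosh (|f x| / ρ) - 1) ∂μ + 2 * μ Set.univ := by
        rw [lintegral_add_right _ measurable_const, lintegral_const_mul' _ _ ENNReal.ofNat_ne_top,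
          lintegral_const]
    _ < ⊤ := by finiteness

theorem K1_finite_on_unit_ball_general (n : ℕ)
    (u : EuclideanSpace ℝ (Fin n) → ℝ)
    (hnorm : ∃ ρ : ℝ, 0 < ρ ∧ ρ < 1 ∧
      ∫⁻ x, ENNReal.ofReal (Real.cosh (|u x| / ρ) - 1) ∂(gaussianMeasure n) ≤ 1) :
    ∫⁻ x, ENNReal.ofReal (Real.exp (u x)) ∂(gaussianMeasure n) < ⊤ := by
  obtain ⟨ρ, hρ, hρ1, hcosh⟩ := hnorm
  exact lintegral_exp_lt_top_of_lintegral_cosh_sub_one_ne_top hρ hρ1.le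
    (ne_top_of_le_ne_top ENNReal.one_ne_top hcosh)

/-- The open unit ball of the centered exponential Orlicz space `B₁` is in the
proper domain of `K₁`: if `u` is centered and its Luxemburg norm is `< 1`
(witnessed by some `ρ < 1`), then `K₁(u) = log ∫ e^u dγ` is finite. -/
theorem K1_finite_on_unit_ball (n : ℕ)
    (u : EuclideanSpace ℝ (Fin n) → ℝ) (hu : Measurable u)
    (hcentered : ∫ x, u x ∂(gaussianMeasure n) = 0)
    (hnorm : ∃ ρ : ℝ, 0 < ρ ∧ ρ < 1 ∧
      ∫⁻ x, ENNReal.ofReal (Real.cosh (|u x| / ρ) - 1) ∂(gaussianMeasure n) ≤ 1) :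
    ∫⁻ x, ENNReal.ofReal (Real.exp (u x)) ∂(gaussianMeasure n) < ⊤ :=
  K1_finite_on_unit_ball_general n u hnorm
end
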